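/- Let q : ℤ → ℚ be a quasipolynomial, i.e., q(t) = Σ_{i=0}^{n} cᵢ(t) tⁱ with each cᵢ : ℤ → ℚ periodic. Then for any positive integer a and integers b, the function t ↦ Σ_{k=0}^{⌊t/a⌋} q(b - k) is again a quasipolynomial in t (of degree at most n+1), for t ranging over nonnegative integers. -/

import Mathlib

/-- A quasipolynomial of degree at most `n`: a function of the form
`∑ i ≤ n, cᵢ(t) tⁱ` with each `cᵢ` periodic. -/
def IsQuasiPolynomial (n : ℕ) (q : ℤ → ℚ) : Prop :=
  ∃ (c : ℕ → ℤ → ℚ) (p : ℤ), 0 < p ∧ (∀ i, ∀ t : ℤ, c i (t + p) = c i t) ∧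
    ∀ t : ℤ, q t = ∑ i ∈ Finset.range (n + 1), c i t * (t : ℚ) ^ i

/-!
Let `p` be a common period of the coefficients of `q` and `P = a p`. Along a residue class
`t = r + P s` one has `⌊t / a⌋ = ⌊r / a⌋ + p s`, so each step in `s` adds one block of `p`
consecutive terms `q (b - k)`, and by periodicity such a block is a polynomial of degree `≤ n` in
`s`. Summing it over `s` gives a polynomial of degree `≤ n + 1` in `s`, hence in `t`.
-/

open Polynomial Finset

theorem Finset.sum_range_mul_eq_sum_sum {M : Type*} [AddCommMonoid M] (f : ℕ → M) (p s : ℕ) :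
    ∑ k ∈ range (p * s), f k = ∑ l ∈ range s, ∑ j ∈ range p, f (p * l + j) := by
  induction s with
  | zero => simp
  | succ s ih => rw [Nat.mul_succ, sum_range_add, ih, sum_range_succ]

namespace Polynomial

theorem natDegree_bernoulli_le (n : ℕ) : (bernoulli n).natDegree ≤ n :=
  natDegree_sum_le_of_forall_le _ _ fun _ _ => (natDegree_monomial_le _).trans (Nat.sub_le _ _)

theorem exists_sum_range_eval_eq (g : ℚ[X]) :
    ∃ G : ℚ[X], G.natDegree ≤ g.natDegree + 1 ∧
      ∀ N : ℕ, ∑ s ∈ range N, g.eval (s : ℚ) = G.eval (N : ℚ) := by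
  set G : ℚ[X] := ∑ i ∈ range (g.natDegree + 1), C (g.coeff i / (i + 1)) * bernoulli (i + 1)
  -- `bernoulli (i + 1) / (i + 1)` is a discrete antiderivative of `X ^ i`
  have hG : ∀ x : ℚ, G.eval (x + 1) - G.eval x = g.eval x := by
    intro x
    simp only [G, eval_finsetSum, eval_mul, eval_C, ← sum_sub_distrib, eval_eq_sum_range (p := g)]
    refine sum_congr rfl fun i _ => ?_
    rw [add_comm x, bernoulli_eval_one_add]
    push_cast
    field_simp
    ring
  refine ⟨G - C (G.eval 0), ?_, fun N => ?_⟩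
  · refine (natDegree_sub_le _ _).trans (max_le ?_ (by simp))
    refine natDegree_sum_le_of_forall_le _ _ fun i hi => ?_
    refine (natDegree_C_mul_le _ _).trans ((natDegree_bernoulli_le _).trans ?_)
    have := mem_range.mp hi
    omega
  · rw [eval_sub, eval_C, ← Nat.cast_zero, ← sum_range_sub (fun s : ℕ => G.eval (s : ℚ))]
    push_cast
    simp only [hG]

end Polynomial

theorem IsQuasiPolynomial.of_periodic {n : ℕ} {P : ℤ} (hP : 0 < P) {W : ℤ → ℚ[X]}
    (hW : ∀ t, (W t).natDegree ≤ n) (hper : Function.Periodic W P) :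
    IsQuasiPolynomial n fun t => (W t).eval (t : ℚ) :=
  ⟨fun i t => (W t).coeff i, P, hP, fun i t => by simp only [hper t],
    fun t => eval_eq_sum_range' (Nat.lt_succ_of_le (hW t)) _⟩

theorem exists_natDegree_le_eval_eq_sub_mul {n : ℕ} {q : ℤ → ℚ} {c : ℕ → ℤ → ℚ} {p : ℤ}
    (hc : ∀ i, Function.Periodic (c i) p)
    (hq : ∀ t, q t = ∑ i ∈ range (n + 1), c i t * (t : ℚ) ^ i) (b : ℤ) :
    ∃ h : ℚ[X], h.natDegree ≤ n ∧ ∀ l : ℤ, q (b - l * p) = h.eval (l : ℚ) := by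
  refine ⟨∑ i ∈ range (n + 1), C (c i b) * (C (b : ℚ) - C (p : ℚ) * X) ^ i, ?_, fun l => ?_⟩
  · have hlin : (C (b : ℚ) - C (p : ℚ) * X).natDegree ≤ 1 :=
      (natDegree_sub_le _ _).trans (max_le (by simp) ((natDegree_C_mul_le _ _).trans (by simp)))
    refine natDegree_sum_le_of_forall_le _ _ fun i hi => ?_
    refine (natDegree_C_mul_le _ _).trans ((natDegree_pow_le_of_le i hlin).trans ?_)
    have := mem_range.mp hi
    omega
  · simp only [hq, eval_finsetSum, eval_mul, eval_pow, eval_sub, eval_C, eval_X]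
    refine sum_congr rfl fun i _ => ?_
    rw [show c i (b - l * p) = c i b by simpa using (hc i).sub_int_mul_eq (x := b) l]
    push_cast
    ring

theorem exists_sum_range_div_eq_eval {n : ℕ} {q : ℤ → ℚ} {c : ℕ → ℤ → ℚ} {p : ℕ} (hp : 0 < p)
    (hc : ∀ i, Function.Periodic (c i) p)
    (hq : ∀ t, q t = ∑ i ∈ range (n + 1), c i t * (t : ℚ) ^ i) {a : ℕ} (ha : 0 < a) (b : ℤ)
    (r : ℕ) :
    ∃ W : ℚ[X], W.natDegree ≤ n + 1 ∧ ∀ s : ℕ,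
      ∑ k ∈ range ((r + a * p * s) / a + 1), q (b - k) = W.eval ((r + a * p * s : ℕ) : ℚ) := by
  set m := r / a + 1
  choose h hdeg hh using fun j : ℕ => exists_natDegree_le_eval_eq_sub_mul hc hq (b - m - j)
  obtain ⟨G, hGdeg, hG⟩ := exists_sum_range_eval_eq (∑ j ∈ range p, h j)
  refine ⟨C (∑ k ∈ range m, q (b - k)) + G.comp (C ((a * p : ℚ)⁻¹) * (X - C (r : ℚ))), ?_,
    fun s => ?_⟩
  · have hlin : (C ((a * p : ℚ)⁻¹) * (X - C (r : ℚ))).natDegree ≤ 1 :=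
      (natDegree_C_mul_le _ _).trans (natDegree_X_sub_C _).le
    have hsum : (∑ j ∈ range p, h j).natDegree ≤ n :=
      natDegree_sum_le_of_forall_le _ _ fun j _ => hdeg j
    refine (natDegree_add_le _ _).trans (max_le ((natDegree_C _).trans_le (Nat.zero_le _)) ?_)
    refine natDegree_comp_le.trans ?_
    nlinarith
  · have hdiv : (r + a * p * s) / a + 1 = m + p * s := by
      rw [mul_assoc, Nat.add_mul_div_left _ _ ha]; ring
    have hblock : ∀ l j : ℕ, q (b - ((m + (p * l + j) : ℕ) : ℤ)) = (h j).eval (l : ℚ) := by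
      intro l j
      have := hh j l
      push_cast at this ⊢
      rw [← this]
      ring_nf
    have hs : (a * p : ℚ)⁻¹ * ((r + a * p * s : ℕ) - r) = s := by
      push_cast
      field_simp
      ring
    rw [hdiv, sum_range_add, sum_range_mul_eq_sum_sum]
    simp only [hblock, ← eval_finsetSum, hG, eval_add, eval_C, eval_comp, eval_mul, eval_sub,
      eval_X, hs]

theorem quasipolynomial_sum_closure (n : ℕ) (q : ℤ → ℚ) (hq : IsQuasiPolynomial n q)
    (a : ℤ) (ha : 0 < a) (b : ℤ) :
    ∃ Q : ℤ → ℚ, IsQuasiPolynomial (n + 1) Q ∧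
      ∀ t : ℤ, 0 ≤ t →
        (∑ k ∈ Finset.range ((⌊(t : ℚ) / a⌋).toNat + 1), q (b - k)) = Q t := by
  obtain ⟨c, p, hp, hc, hcq⟩ := hq
  lift p to ℕ using hp.le
  lift a to ℕ using ha.le
  rw [Nat.cast_pos] at hp ha
  choose W hWdeg hW using exists_sum_range_div_eq_eval hp hc hcq ha b
  set P := a * p
  refine ⟨fun t => (W (t % P).toNat).eval (t : ℚ),
    IsQuasiPolynomial.of_periodic (P := P) (by positivity) (fun _ => hWdeg _) fun t => ?_,
    fun t ht => ?_⟩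
  · simp only [Int.add_emod_right]
  · lift t to ℕ using ht
    have := hW (t % P) (t / P)
    rw [Nat.mod_add_div] at this
    dsimp only
    rwa [Int.cast_natCast, Int.cast_natCast, Rat.floor_natCast_div_natCast, ← Int.natCast_div,
      ← Int.natCast_mod, Int.toNat_natCast, Int.toNat_natCast]
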